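/- In the score-threshold routing model with f(s) > 0 and ΔC(s) > 0 for all s, the sign of J′(τ) equals the sign of ρ(τ) − λ for every τ ∈ ℝ: J′(τ) > 0 if and only if ρ(τ) > λ, J′(τ) = 0 if and only if ρ(τ) = λ, and J′(τ) < 0 if and only if ρ(τ) < λ. -/

import Mathlib

open MeasureTheory Set

/-!
Moving the threshold from `τ` to `τ + dτ` sends the scores in `[τ, τ + dτ)` from the edge to the
cloud, so by the fundamental theorem of calculus `J'(τ) = f(τ) (ΔQ(τ) − λ ΔC(τ))
= f(τ) ΔC(τ) (ρ(τ) − λ)`, and the prefactor `f(τ) ΔC(τ)` is positive.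
-/

section ThresholdIntegral

variable {g : ℝ → ℝ}

theorem hasDerivAt_integral_Iic (hg : Continuous g) (hgi : Integrable g) (x : ℝ) :
    HasDerivAt (fun τ => ∫ t in Iic τ, g t) (g x) x := by
  have hsplit : (fun τ => ∫ t in Iic τ, g t) =
      fun τ => (∫ t in Iic (0 : ℝ), g t) + ∫ t in (0 : ℝ)..τ, g t := by
    funext τ
    rw [← intervalIntegral.integral_Iic_sub_Iic hgi.integrableOn hgi.integrableOn]
    ring
  rw [hsplit]
  exact (intervalIntegral.integral_hasDerivAt_right (hg.intervalIntegrable 0 x)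
    (hg.stronglyMeasurableAtFilter _ _) hg.continuousAt).const_add _

theorem hasDerivAt_integral_Iio (hg : Continuous g) (hgi : Integrable g) (x : ℝ) :
    HasDerivAt (fun τ => ∫ t in Iio τ, g t) (g x) x := by
  simpa only [integral_Iic_eq_integral_Iio] using hasDerivAt_integral_Iic hg hgi x

theorem hasDerivAt_integral_Ioi (hg : Continuous g) (hgi : Integrable g) (x : ℝ) :
    HasDerivAt (fun τ => ∫ t in Ioi τ, g t) (-g x) x := by
  have hcompl : (fun τ => ∫ t in Ioi τ, g t) = fun τ => (∫ t, g t) - ∫ t in Iic τ, g t := by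
    funext τ
    rw [← integral_add_compl measurableSet_Iic hgi, compl_Iic, add_sub_cancel_left]
  rw [hcompl, ← zero_sub]
  exact (hasDerivAt_const x _).sub (hasDerivAt_integral_Iic hg hgi x)

theorem hasDerivAt_integral_Ioi_add_integral_Iio {gE gC : ℝ → ℝ}
    (hgE : Continuous gE) (hgC : Continuous gC) (hgEi : Integrable gE) (hgCi : Integrable gC)
    (x : ℝ) :
    HasDerivAt (fun τ => (∫ t in Ioi τ, gE t) + ∫ t in Iio τ, gC t) (gC x - gE x) x := by
  rw [sub_eq_neg_add]
  exact (hasDerivAt_integral_Ioi hgE hgEi x).add (hasDerivAt_integral_Iio hgC hgCi x)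

end ThresholdIntegral

theorem sign_mul_sub_iff {α : Type*} [Ring α] [LinearOrder α] [IsStrictOrderedRing α]
    {a r l : α} (ha : 0 < a) :
    (0 < a * (r - l) ↔ l < r) ∧ (a * (r - l) = 0 ↔ r = l) ∧ (a * (r - l) < 0 ↔ r < l) := by
  refine ⟨?_, ?_, ?_⟩
  · rw [mul_pos_iff_of_pos_left ha, sub_pos]
  · rw [mul_eq_zero, or_iff_right ha.ne', sub_eq_zero]
  · rw [← mul_zero a, mul_lt_mul_iff_right₀ ha, sub_neg]

theorem stmt_3_general (f qE qC cE cC : ℝ → ℝ) (lam : ℝ)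
    (hf : Continuous f) (hfpos : ∀ s, 0 < f s)
    (hqE : Continuous qE) (hqC : Continuous qC)
    (hcE : Continuous cE) (hcC : Continuous cC)
    (hIqE : Integrable (fun s => qE s * f s))
    (hIqC : Integrable (fun s => qC s * f s))
    (hIcE : Integrable (fun s => cE s * f s))
    (hIcC : Integrable (fun s => cC s * f s))
    (hΔC : ∀ s, 0 < cC s - cE s) :
    ∀ τ : ℝ,
      (0 < deriv (fun τ => ((∫ s in Ioi τ, qE s * f s) + ∫ s in Iio τ, qC s * f s)
          - lam * ((∫ s in Ioi τ, cE s * f s) + ∫ s in Iio τ, cC s * f s)) τ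
        ↔ lam < (qC τ - qE τ) / (cC τ - cE τ))
      ∧ (deriv (fun τ => ((∫ s in Ioi τ, qE s * f s) + ∫ s in Iio τ, qC s * f s)
          - lam * ((∫ s in Ioi τ, cE s * f s) + ∫ s in Iio τ, cC s * f s)) τ = 0
        ↔ (qC τ - qE τ) / (cC τ - cE τ) = lam)
      ∧ (deriv (fun τ => ((∫ s in Ioi τ, qE s * f s) + ∫ s in Iio τ, qC s * f s)
          - lam * ((∫ s in Ioi τ, cE s * f s) + ∫ s in Iio τ, cC s * f s)) τ < 0
        ↔ (qC τ - qE τ) / (cC τ - cE τ) < lam) := by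
  intro τ
  have hJ := (hasDerivAt_integral_Ioi_add_integral_Iio (hqE.mul hf) (hqC.mul hf) hIqE hIqC τ).sub
    ((hasDerivAt_integral_Ioi_add_integral_Iio (hcE.mul hf) (hcC.mul hf) hIcE hIcC τ).const_mul lam)
  have hJ' : deriv (fun τ => ((∫ s in Ioi τ, qE s * f s) + ∫ s in Iio τ, qC s * f s)
      - lam * ((∫ s in Ioi τ, cE s * f s) + ∫ s in Iio τ, cC s * f s)) τ
      = (f τ * (cC τ - cE τ)) * ((qC τ - qE τ) / (cC τ - cE τ) - lam) := by
    refine hJ.deriv.trans ?_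
    simp only [Pi.mul_apply]
    field_simp [(hΔC τ).ne']
  rw [hJ']
  exact sign_mul_sub_iff (mul_pos (hfpos τ) (hΔC τ))

/-- With `f > 0` and `ΔC > 0` everywhere, the sign of `J'(τ)` equals the
sign of `ρ(τ) − λ`: `J'(τ) > 0 ↔ ρ(τ) > λ`, `J'(τ) = 0 ↔ ρ(τ) = λ`, and
`J'(τ) < 0 ↔ ρ(τ) < λ`. -/
theorem stmt_3 (f qE qC cE cC : ℝ → ℝ) (lam : ℝ) (hlam : 0 < lam)
    (hf : Continuous f) (hfpos : ∀ s, 0 < f s) (hfprob : (∫ s, f s) = 1)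
    (hqE : Continuous qE) (hqC : Continuous qC)
    (hcE : Continuous cE) (hcC : Continuous cC)
    (hIqE : Integrable (fun s => qE s * f s))
    (hIqC : Integrable (fun s => qC s * f s))
    (hIcE : Integrable (fun s => cE s * f s))
    (hIcC : Integrable (fun s => cC s * f s))
    (hΔC : ∀ s, 0 < cC s - cE s) :
    ∀ τ : ℝ,
      (0 < deriv (fun τ => ((∫ s in Ioi τ, qE s * f s) + ∫ s in Iio τ, qC s * f s)
          - lam * ((∫ s in Ioi τ, cE s * f s) + ∫ s in Iio τ, cC s * f s)) τ
        ↔ lam < (qC τ - qE τ) / (cC τ - cE τ))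
      ∧ (deriv (fun τ => ((∫ s in Ioi τ, qE s * f s) + ∫ s in Iio τ, qC s * f s)
          - lam * ((∫ s in Ioi τ, cE s * f s) + ∫ s in Iio τ, cC s * f s)) τ = 0
        ↔ (qC τ - qE τ) / (cC τ - cE τ) = lam)
      ∧ (deriv (fun τ => ((∫ s in Ioi τ, qE s * f s) + ∫ s in Iio τ, qC s * f s)
          - lam * ((∫ s in Ioi τ, cE s * f s) + ∫ s in Iio τ, cC s * f s)) τ < 0
        ↔ (qC τ - qE τ) / (cC τ - cE τ) < lam) :=
  stmt_3_general f qE qC cE cC lam hf hfpos hqE hqC hcE hcC hIqE hIqC hIcE hIcC hΔC
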